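/- Let K be a perfect field with char K ≠ 2, n ≥ 1, and Ω = [[0, I_n],[−I_n, 0]] ∈ M_{2n×2n}(K). If A ∈ M_{2n×2n}(K) satisfies Aᵀ = Ω A Ω⁻¹, then there exists a symplectic matrix C (Cᵀ Ω C = Ω) such that C⁻¹ A C = [[B, 0],[0, Bᵀ]] for some B ∈ M_{n×n}(K). -/

import Mathlib

/-!
Read `ω(x, y) = xᵀ Ω y` as a symplectic form on `K²ⁿ`; the hypothesis says that `A` is
`ω`-self-adjoint. It suffices to split `K²ⁿ = L ⊕ M` into two `A`-invariant totally isotropic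
subspaces: a basis of `L` together with the `ω`-dual basis of `M` is symplectic, `A` is block
diagonal in it, and self-adjointness forces the block on `M` to be the transpose of the one on `L`.

The splitting is built by induction on the dimension. Take `v` whose annihilator in `K[X]` is that
of `A`, so that `v, A v, …, A^(d-1) v` are independent (`d` the degree of the minimal polynomial),
and `u` with `ω(u, A^i v)` zero for `i < d - 1` but not for `i = d - 1`. As `2 ≠ 0`,
self-adjointness makes every cyclic subspace `K[A] x` isotropic, and the choice of `u` makes
`S = K[A] v + K[A] u` nondegenerate. Hence `S^⊥` is an invariant nondegenerate complement of
smaller dimension, and its splitting extends by `K[A] v` and `K[A] u`.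
-/

open Polynomial Module
open LinearMap (BilinForm)
open scoped Matrix

namespace Module.End

section Field

variable {K V : Type*} [Field K] [AddCommGroup V] [Module K V] {f : End K V} {v : V}

theorem exists_forall_aeval_apply_eq_zero_iff [FiniteDimensional K V] (f : End K V) :
    ∃ v : V, ∀ p : K[X], aeval f p v = 0 ↔ aeval f p = 0 := by
  obtain ⟨x, hx⟩ := exists_ker_toSpanSingleton_eq_annihilator K[X] (AEval' f)
  obtain ⟨v, rfl⟩ := (AEval'.of f).surjective x
  refine ⟨v, fun p => ⟨fun hp => LinearMap.ext fun w => ?_, fun hp => by rw [hp]; rfl⟩⟩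
  have hp' : p ∈ LinearMap.ker (LinearMap.toSpanSingleton K[X] _ (AEval'.of f v)) := by
    rw [LinearMap.mem_ker, LinearMap.toSpanSingleton_apply, ← AEval.of_aeval_smul]
    exact congrArg _ hp |>.trans (map_zero _)
  rw [hx, Module.mem_annihilator] at hp'
  exact (AEval'.of f).injective ((AEval.of_aeval_smul f p w).trans (hp' _))

theorem linearIndependent_pow_apply (hv : ∀ p : K[X], aeval f p v = 0 → aeval f p = 0) :
    LinearIndependent K fun i : Fin (minpoly K f).natDegree => (f ^ (i : ℕ)) v := by
  refine (linearIndependent_pow f).map (f := LinearMap.applyₗ (R := K) v) ?_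
  refine Submodule.disjoint_def.mpr fun g hg hgv => ?_
  obtain ⟨p, rfl⟩ : g ∈ LinearMap.range (aeval f).toLinearMap :=
    Submodule.span_le.mpr (by rintro _ ⟨i, rfl⟩; exact ⟨X ^ (i : ℕ), by simp⟩) hg
  exact hv p hgv

theorem exists_dual_forall_aeval_mul_X_pow_apply_eq_zero [FiniteDimensional K V] [Nontrivial V]
    (hv : ∀ p : K[X], aeval f p v = 0 → aeval f p = 0) :
    ∃ ξ : Dual K V,
      ∀ t : K[X], (∀ j : ℕ, ξ (aeval f (t * X ^ j) v) = 0) → aeval f t v = 0 := by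
  set m := minpoly K f
  set d := m.natDegree
  have hd : 0 < d := minpoly.natDegree_pos (Algebra.IsIntegral.isIntegral f)
  obtain ⟨ξ, hξ_last, hξ⟩ :
      ∃ ξ : Dual K V, ξ ((f ^ (d - 1)) v) ≠ 0 ∧ ∀ i < d - 1, ξ ((f ^ i) v) = 0 := by
    have hli : LinearIndependent K fun i : Fin d => (f ^ (i : ℕ)) v :=
      linearIndependent_pow_apply hv
    have hnot := hli.notMem_span_image
      (s := {i | (i : ℕ) < d - 1}) (x := ⟨d - 1, Nat.sub_lt hd Nat.one_pos⟩) (by simp)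
    obtain ⟨ξ, hξ_last, hξ⟩ := Submodule.exists_dual_map_eq_bot_of_notMem hnot inferInstance
    refine ⟨ξ, hξ_last, fun i hi => ?_⟩
    exact (Submodule.mem_bot K).mp
      (hξ ▸ Submodule.mem_map_of_mem (Submodule.subset_span ⟨⟨i, by omega⟩, hi, rfl⟩))
  refine ⟨ξ, fun t ht => by_contra fun htv => ?_⟩
  set r := t %ₘ m
  have haeval : aeval f r = aeval f t := aeval_modByMonic_eq_self_of_root (minpoly.aeval K f)
  have hr : r ≠ 0 := fun h => htv (by rw [← haeval, h, map_zero]; rfl)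
  have hrd : r.natDegree < d := natDegree_lt_natDegree hr
    (degree_modByMonic_lt t (minpoly.monic (Algebra.IsIntegral.isIntegral f)))
  -- multiplying by a power of `X` moves the leading coefficient of `r` to degree `d - 1`
  set j := d - 1 - r.natDegree
  have hj : r.natDegree + j = d - 1 := by omega
  have hlead : ξ (aeval f (t * X ^ j) v) = r.leadingCoeff * ξ ((f ^ (d - 1)) v) := by
    rw [map_mul, ← haeval, ← map_mul,
      aeval_eq_sum_range' (n := d) (by rw [natDegree_mul_X_pow _ hr]; omega), LinearMap.sum_apply,
      map_sum, Finset.sum_eq_single (d - 1)]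
    · rw [LinearMap.smul_apply, map_smul, ← hj, coeff_mul_X_pow, smul_eq_mul]
      rfl
    · intro i hi hne
      rw [LinearMap.smul_apply, map_smul, hξ i (by simp at hi; omega), smul_zero]
    · simp [hd]
  exact mul_ne_zero (leadingCoeff_ne_zero.mpr hr) hξ_last (hlead ▸ ht j)

end Field

section CommRing

variable {R M : Type*} [CommRing R] [AddCommGroup M] [Module R M]

noncomputable def cyclicSubspace (f : End R M) (v : M) : Submodule R M :=
  LinearMap.range ((LinearMap.applyₗ v).comp (aeval f).toLinearMap)

variable {f : End R M}

theorem mem_cyclicSubspace {v w : M} : w ∈ f.cyclicSubspace v ↔ ∃ p : R[X], aeval f p v = w :=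
  Iff.rfl

theorem aeval_apply_mem_cyclicSubspace (p : R[X]) (v : M) :
    aeval f p v ∈ f.cyclicSubspace v :=
  ⟨p, rfl⟩

theorem self_mem_cyclicSubspace (v : M) : v ∈ f.cyclicSubspace v := by
  simpa using aeval_apply_mem_cyclicSubspace (f := f) 1 v

theorem cyclicSubspace_mem_invtSubmodule (v : M) : f.cyclicSubspace v ∈ f.invtSubmodule := by
  intro w hw
  obtain ⟨p, rfl⟩ := mem_cyclicSubspace.mp hw
  have h := aeval_apply_mem_cyclicSubspace (f := f) (X * p) v
  rwa [map_mul, aeval_X, Module.End.mul_apply] at h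

end CommRing

end Module.End

namespace LinearMap

variable {R M : Type*} [CommRing R] [AddCommGroup M] [Module R M] {B : M →ₗ[R] M →ₗ[R] R}
  {f : Module.End R M}

theorem IsSelfAdjoint.pow (hf : B.IsSelfAdjoint f) (n : ℕ) : B.IsSelfAdjoint ⇑(f ^ n) := by
  induction n with
  | zero => exact isAdjointPair_one
  | succ n ih =>
    have h := ih.mul hf
    rwa [← pow_succ, ← pow_succ'] at h

theorem IsSelfAdjoint.aeval (hf : B.IsSelfAdjoint f) (p : R[X]) :
    B.IsSelfAdjoint ⇑(aeval f p) := by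
  induction p using Polynomial.induction_on' with
  | add p q hp hq => rw [map_add]; exact hp.add hq
  | monomial n a => rw [aeval_monomial, ← Algebra.smul_def]; exact (hf.pow n).smul a

end LinearMap

namespace Module.Basis

section Ring

variable {R V ι κ : Type*} [Ring R] [AddCommGroup V] [Module R V] {L M : Submodule R V}

noncomputable def ofIsCompl (h : IsCompl L M) (bL : Basis ι R L) (bM : Basis κ R M) :
    Basis (ι ⊕ κ) R V :=
  (bL.prod bM).map (Submodule.prodEquivOfIsCompl L M h)

variable (h : IsCompl L M) (bL : Basis ι R L) (bM : Basis κ R M)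

@[simp]
theorem ofIsCompl_inl (i : ι) : ofIsCompl h bL bM (.inl i) = bL i := by
  simp [ofIsCompl]

@[simp]
theorem ofIsCompl_inr (i : κ) : ofIsCompl h bL bM (.inr i) = bM i := by
  simp [ofIsCompl]

end Ring

variable {R ι : Type*} [CommRing R] [Fintype ι] [DecidableEq ι] (b : Basis ι R (ι → R))

theorem toMatrix_basisFun_transpose_mul_mul (J : Matrix ι ι R) :
    ((Pi.basisFun R ι).toMatrix b)ᵀ * J * (Pi.basisFun R ι).toMatrix b =
      LinearMap.BilinForm.toMatrix b (Matrix.toBilin' J) := by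
  rw [← LinearMap.BilinForm.toMatrix_mul_basis_toMatrix (b := Pi.basisFun R ι) b,
    LinearMap.BilinForm.toMatrix_basisFun, LinearMap.BilinForm.toMatrix'_toBilin']

theorem inv_toMatrix_basisFun_mul_mul (A : Matrix ι ι R) :
    ((Pi.basisFun R ι).toMatrix b)⁻¹ * A * (Pi.basisFun R ι).toMatrix b =
      LinearMap.toMatrix b b (Matrix.toLin' A) := by
  rw [Matrix.inv_eq_left_inv (b.toMatrix_mul_toMatrix_flip (Pi.basisFun R ι)),
    ← basis_toMatrix_mul_linearMap_toMatrix_mul_basis_toMatrix b (Pi.basisFun R ι) b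
      (Pi.basisFun R ι),
    LinearMap.toMatrix_eq_toMatrix', LinearMap.toMatrix'_toLin']

end Module.Basis

namespace LinearMap

variable {R V ι κ : Type*} [CommRing R] [AddCommGroup V] [Module R V] {L M : Submodule R V}
  [Fintype ι] [Fintype κ] [DecidableEq ι] [DecidableEq κ]

theorem toMatrix_ofIsCompl {f : Module.End R V} (hLf : L ∈ f.invtSubmodule)
    (hMf : M ∈ f.invtSubmodule) (h : IsCompl L M) (bL : Basis ι R L) (bM : Basis κ R M) :
    toMatrix (bL.ofIsCompl h bM) (bL.ofIsCompl h bM) f =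
      Matrix.fromBlocks (toMatrix bL bL (f.restrict hLf)) 0 0
        (toMatrix bM bM (f.restrict hMf)) := by
  rw [Basis.ofIsCompl, toMatrix_map_left, toMatrix_map_right, ← toMatrix_prodMap]
  congr 1
  exact LinearMap.ext fun x => (LinearEquiv.symm_apply_eq _).mpr (by simp; rfl)

end LinearMap

namespace Matrix

variable {n R : Type*} [Fintype n] [DecidableEq n] [CommRing R]

theorem fromBlocks_zero_one_neg_one_zero_mul_neg_self :
    (fromBlocks 0 1 (-1) 0 : Matrix (n ⊕ n) (n ⊕ n) R) * -fromBlocks 0 1 (-1) 0 = 1 := by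
  simp [fromBlocks_neg, fromBlocks_multiply]

theorem isAlt_toBilin'_fromBlocks_zero_one_neg_one_zero :
    (toBilin' (fromBlocks 0 1 (-1) 0 : Matrix (n ⊕ n) (n ⊕ n) R)).IsAlt := by
  intro x
  simp [toBilin'_apply', fromBlocks_mulVec, dotProduct, Fintype.sum_sum_type, neg_mulVec,
    mul_comm]

theorem eq_transpose_of_isAdjointPair_fromBlocks {B D : Matrix n n R}
    (h : IsAdjointPair (fromBlocks 0 1 (-1) 0) (fromBlocks 0 1 (-1) 0) (fromBlocks B 0 0 D)
      (fromBlocks B 0 0 D)) :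
    D = Bᵀ := by
  rw [IsAdjointPair, fromBlocks_transpose, fromBlocks_multiply, fromBlocks_multiply] at h
  simpa using ((fromBlocks_inj.mp h).2.1).symm

end Matrix

namespace LinearMap.BilinForm

open Module.End

variable {K V ι : Type*} [Field K] [AddCommGroup V] [Module K V] {ω : BilinForm K V}
  {f : Module.End K V} {L M : Submodule K V}

def IsTotallyIsotropic (ω : BilinForm K V) (L : Submodule K V) : Prop :=
  ∀ x ∈ L, ∀ y ∈ L, ω x y = 0

theorem IsAlt.apply_apply_self_eq_zero (h2 : (2 : K) ≠ 0) (halt : ω.IsAlt)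
    (hf : ω.IsSelfAdjoint f) (x : V) : ω x (f x) = 0 := by
  have h : ω x (f x) = -ω x (f x) := by rw [LinearMap.IsAlt.neg halt, hf x x]
  exact (mul_eq_zero.mp (by linear_combination h)).resolve_left h2

theorem isTotallyIsotropic_cyclicSubspace (h2 : (2 : K) ≠ 0) (halt : ω.IsAlt)
    (hf : ω.IsSelfAdjoint f) (v : V) : ω.IsTotallyIsotropic (f.cyclicSubspace v) := by
  intro x hx y hy
  obtain ⟨p, rfl⟩ := mem_cyclicSubspace.mp hx
  obtain ⟨q, rfl⟩ := mem_cyclicSubspace.mp hy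
  rw [(hf.aeval p) v, ← Module.End.mul_apply, ← map_mul]
  exact halt.apply_apply_self_eq_zero h2 (hf.aeval _) v

theorem IsTotallyIsotropic.sup (hrefl : ω.IsRefl)
    (hL : ω.IsTotallyIsotropic L) (hM : ω.IsTotallyIsotropic M) (hLM : M ≤ ω.orthogonal L) :
    ω.IsTotallyIsotropic (L ⊔ M) := by
  rintro _ hx _ hy
  obtain ⟨a, ha, b, hb, rfl⟩ := Submodule.mem_sup.mp hx
  obtain ⟨c, hc, d, hd, rfl⟩ := Submodule.mem_sup.mp hy
  have hac := hL a ha c hc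
  have had : ω a d = 0 := hLM hd a ha
  have hbc : ω b c = 0 := hrefl _ _ (hLM hb c hc)
  have hbd := hM b hb d hd
  simp [hac, had, hbc, hbd]

theorem IsTotallyIsotropic.map_subtype {U : Submodule K V} {N : Submodule K U}
    (hN : (ω.restrict U).IsTotallyIsotropic N) : ω.IsTotallyIsotropic (N.map U.subtype) := by
  rintro _ ⟨x, hx, rfl⟩ _ ⟨y, hy, rfl⟩
  exact hN x hx y hy

theorem isCompl_of_isTotallyIsotropic (hω : ω.SeparatingLeft)
    (hL : ω.IsTotallyIsotropic L) (hM : ω.IsTotallyIsotropic M) (hLM : L ⊔ M = ⊤) :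
    IsCompl L M := by
  refine ⟨Submodule.disjoint_def.mpr fun x hxL hxM => hω x fun y => ?_, codisjoint_iff.mpr hLM⟩
  obtain ⟨a, ha, b, hb, rfl⟩ := Submodule.mem_sup.mp (hLM ▸ Submodule.mem_top : y ∈ L ⊔ M)
  rw [map_add, hL x hxL a ha, hM x hxM b hb, add_zero]

theorem orthogonal_mem_invtSubmodule (hf : ω.IsSelfAdjoint f) {S : Submodule K V}
    (hS : S ∈ f.invtSubmodule) : ω.orthogonal S ∈ f.invtSubmodule := fun x hx s hs => by
  change ω s (f x) = 0
  rw [← hf s x]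
  exact hx (f s) (hS hs)

theorem restrict_sup_cyclicSubspace_nondegenerate (h2 : (2 : K) ≠ 0) (halt : ω.IsAlt)
    (hf : ω.IsSelfAdjoint f) {v u : V} (hv : ∀ p : K[X], aeval f p v = 0 → aeval f p = 0)
    (hu : ∀ t : K[X], (∀ j : ℕ, ω u (aeval f (t * X ^ j) v) = 0) → aeval f t v = 0) :
    (ω.restrict (f.cyclicSubspace v ⊔ f.cyclicSubspace u)).Nondegenerate := by
  refine ω.nondegenerate_restrict_of_disjoint_orthogonal halt.isRefl
    (Submodule.disjoint_def.mpr fun x hx hx_orth => ?_)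
  obtain ⟨a, ha, b, hb, rfl⟩ := Submodule.mem_sup.mp hx
  obtain ⟨p, rfl⟩ := mem_cyclicSubspace.mp ha
  obtain ⟨q, rfl⟩ := mem_cyclicSubspace.mp hb
  have hq : aeval f q = 0 := by
    refine hv q (hu q fun j => halt.isRefl _ _ ?_)
    have h : ω (aeval f (X ^ j : K[X]) v) (aeval f p v + aeval f q u) = 0 :=
      hx_orth _ (Submodule.mem_sup_left (aeval_apply_mem_cyclicSubspace _ v))
    rwa [map_add, isTotallyIsotropic_cyclicSubspace h2 halt hf v _
      (aeval_apply_mem_cyclicSubspace _ v) _ (aeval_apply_mem_cyclicSubspace p v), zero_add,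
      ← hf.aeval q, ← Module.End.mul_apply, ← map_mul] at h
  have hp : aeval f p = 0 := by
    refine hv p (hu p fun j => ?_)
    have h : ω (aeval f (X ^ j : K[X]) u) (aeval f p v + aeval f q u) = 0 :=
      hx_orth _ (Submodule.mem_sup_right (aeval_apply_mem_cyclicSubspace _ u))
    rwa [hq, LinearMap.zero_apply, add_zero, hf.aeval, ← Module.End.mul_apply, ← map_mul,
      mul_comm] at h
  simp [hp, hq]

theorem exists_restrict_sup_cyclicSubspace_nondegenerate [FiniteDimensional K V] [Nontrivial V]
    (h2 : (2 : K) ≠ 0) (halt : ω.IsAlt) (hω : ω.Nondegenerate) (hf : ω.IsSelfAdjoint f) :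
    ∃ v u : V, v ≠ 0 ∧
      (ω.restrict (f.cyclicSubspace v ⊔ f.cyclicSubspace u)).Nondegenerate := by
  obtain ⟨v, hv⟩ := exists_forall_aeval_apply_eq_zero_iff f
  obtain ⟨ξ, hξ⟩ := exists_dual_forall_aeval_mul_X_pow_apply_eq_zero fun p => (hv p).mp
  refine ⟨v, (ω.toDual hω).symm ξ, fun hv0 => one_ne_zero (α := End K V) ?_,
    restrict_sup_cyclicSubspace_nondegenerate h2 halt hf (fun p => (hv p).mp)
      fun t ht => hξ t (by simpa using ht)⟩
  simpa using (hv 1).mp (by rw [hv0, map_zero])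

theorem exists_isCompl_isTotallyIsotropic_invtSubmodule [FiniteDimensional K V]
    (h2 : (2 : K) ≠ 0) (halt : ω.IsAlt) (hω : ω.Nondegenerate) (hf : ω.IsSelfAdjoint f) :
    ∃ L M : Submodule K V, L ∈ f.invtSubmodule ∧ M ∈ f.invtSubmodule ∧
      ω.IsTotallyIsotropic L ∧ ω.IsTotallyIsotropic M ∧ IsCompl L M := by
  induction hd : finrank K V using Nat.strong_induction_on generalizing V with
  | _ d ih =>
  rcases subsingleton_or_nontrivial V with hV | hV
  · refine ⟨⊥, ⊤, invtSubmodule.bot_mem f, invtSubmodule.top_mem f, ?_, ?_,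
      isCompl_bot_top⟩ <;> intro x _ y _ <;> simp [Subsingleton.elim x 0]
  obtain ⟨v, u, hv0, hSω⟩ := exists_restrict_sup_cyclicSubspace_nondegenerate h2 halt hω hf
  set W := f.cyclicSubspace v
  set W' := f.cyclicSubspace u
  set U := ω.orthogonal (W ⊔ W')
  have hSU : IsCompl (W ⊔ W') U :=
    (restrict_nondegenerate_iff_isCompl_orthogonal halt.isRefl).mp hSω
  have hUf : U ∈ f.invtSubmodule := orthogonal_mem_invtSubmodule hf
    (invtSubmodule.sup_mem (cyclicSubspace_mem_invtSubmodule v)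
      (cyclicSubspace_mem_invtSubmodule u))
  have hUω : (ω.restrict U).Nondegenerate :=
    ω.nondegenerate_restrict_of_disjoint_orthogonal halt.isRefl
      (by rw [orthogonal_orthogonal hω halt.isRefl]; exact hSU.disjoint.symm)
  have hUd : finrank K U < d := by
    have hS : 0 < finrank K ↥(W ⊔ W') := Module.finrank_pos_iff_exists_ne_zero.mpr
      ⟨⟨v, Submodule.mem_sup_left (self_mem_cyclicSubspace v)⟩, by simpa using hv0⟩
    have := Submodule.finrank_add_eq_of_isCompl hSU
    omega
  obtain ⟨L, M, hLf, hMf, hL, hM, hLM⟩ := ih _ hUd (fun x => halt x) hUω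
    (f := f.restrict hUf) (fun x y => hf x y) rfl
  have hL' : ω.IsTotallyIsotropic (W ⊔ L.map U.subtype) :=
    (isTotallyIsotropic_cyclicSubspace h2 halt hf v).sup halt.isRefl hL.map_subtype
      ((Submodule.map_subtype_le U L).trans (orthogonal_le le_sup_left))
  have hM' : ω.IsTotallyIsotropic (W' ⊔ M.map U.subtype) :=
    (isTotallyIsotropic_cyclicSubspace h2 halt hf u).sup halt.isRefl hM.map_subtype
      ((Submodule.map_subtype_le U M).trans (orthogonal_le le_sup_right))
  refine ⟨_, _, invtSubmodule.sup_mem (cyclicSubspace_mem_invtSubmodule v)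
      (invtSubmodule.map_subtype_mem_of_mem_invtSubmodule f hUf hLf),
    invtSubmodule.sup_mem (cyclicSubspace_mem_invtSubmodule u)
      (invtSubmodule.map_subtype_mem_of_mem_invtSubmodule f hUf hMf),
    hL', hM', isCompl_of_isTotallyIsotropic hω.1 hL' hM' ?_⟩
  rw [sup_sup_sup_comm, ← Submodule.map_sup, hLM.sup_eq_top, Submodule.map_subtype_top,
    hSU.sup_eq_top]

theorem isPerfPair_of_isCompl [FiniteDimensional K V] (hω : ω.Nondegenerate)
    (hL : ω.IsTotallyIsotropic L) (hM : ω.IsTotallyIsotropic M) (hLM : IsCompl L M) :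
    (ω.compl₁₂ L.subtype M.subtype).IsPerfPair := by
  refine .of_injective (injective_iff_map_eq_zero _ |>.mpr fun x hx => ?_)
    (injective_iff_map_eq_zero _ |>.mpr fun y hy => ?_)
  · refine Subtype.ext (hω.1 x fun z => LinearMap.congr_fun (ext_on_codisjoint (g := 0)
      hLM.codisjoint (fun a ha => hL x x.2 a ha) (fun b hb => ?_)) z)
    exact LinearMap.congr_fun hx ⟨b, hb⟩
  · refine Subtype.ext (hω.2 y fun z => LinearMap.congr_fun (ext_on_codisjoint (g := 0)
      (f := ω.flip y) hLM.codisjoint (fun a ha => ?_) (fun b hb => hM b hb y y.2)) z)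
    exact LinearMap.congr_fun hy ⟨a, ha⟩

theorem IsTotallyIsotropic.finrank_eq_of_isCompl [FiniteDimensional K V] (hω : ω.Nondegenerate)
    (hL : ω.IsTotallyIsotropic L) (hM : ω.IsTotallyIsotropic M) (hLM : IsCompl L M) :
    finrank K L = finrank K M :=
  have := isPerfPair_of_isCompl hω hL hM hLM
  finrank_of_isPerfPair (ω.compl₁₂ L.subtype M.subtype)

theorem exists_basis_apply_eq_ite [FiniteDimensional K V] [Fintype ι] [DecidableEq ι]
    (hω : ω.Nondegenerate) (hL : ω.IsTotallyIsotropic L) (hM : ω.IsTotallyIsotropic M)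
    (hLM : IsCompl L M) (bL : Basis ι K L) :
    ∃ bM : Basis ι K M, ∀ i j, ω (bL i) (bM j) = if i = j then 1 else 0 := by
  have := isPerfPair_of_isCompl hω hL hM hLM
  set P := ω.compl₁₂ L.subtype M.subtype
  refine ⟨bL.dualBasis.map P.flip.toPerfPair.symm, fun i j => ?_⟩
  change P.flip (P.flip.toPerfPair.symm (bL.dualBasis j)) (bL i) = _
  rw [apply_symm_toPerfPair_self, Basis.dualBasis_apply_self]

section DualBases

variable [Fintype ι] [DecidableEq ι] {bL : Basis ι K L} {bM : Basis ι K M}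
  (hpair : ∀ i j, ω (bL i) (bM j) = if i = j then 1 else 0)
include hpair

theorem toMatrix_ofIsCompl (halt : ω.IsAlt) (hL : ω.IsTotallyIsotropic L)
    (hM : ω.IsTotallyIsotropic M) (hLM : IsCompl L M) :
    BilinForm.toMatrix (bL.ofIsCompl hLM bM) ω = Matrix.fromBlocks 0 1 (-1) 0 := by
  ext (i | i) (j | j)
  · simp [BilinForm.toMatrix_apply, hL _ (bL i).2 _ (bL j).2]
  · simp [BilinForm.toMatrix_apply, hpair, Matrix.one_apply]
  · simp [BilinForm.toMatrix_apply, ← LinearMap.IsAlt.neg halt (bL j), hpair, Matrix.one_apply,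
      eq_comm]
  · simp [BilinForm.toMatrix_apply, hM _ (bM i).2 _ (bM j).2]

theorem _root_.LinearMap.IsSelfAdjoint.toMatrix_ofIsCompl (hf : ω.IsSelfAdjoint f)
    (halt : ω.IsAlt) (hL : ω.IsTotallyIsotropic L) (hM : ω.IsTotallyIsotropic M)
    (hLM : IsCompl L M) (hLf : L ∈ f.invtSubmodule) (hMf : M ∈ f.invtSubmodule) :
    LinearMap.toMatrix (bL.ofIsCompl hLM bM) (bL.ofIsCompl hLM bM) f =
      Matrix.fromBlocks (LinearMap.toMatrix bL bL (f.restrict hLf)) 0 0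
        (LinearMap.toMatrix bL bL (f.restrict hLf))ᵀ := by
  set b := bL.ofIsCompl hLM bM
  have hadj : (BilinForm.toMatrix b ω).IsAdjointPair (BilinForm.toMatrix b ω)
      (LinearMap.toMatrix b b f) (LinearMap.toMatrix b b f) :=
    (isAdjointPair_toLinearMap₂ b b _ _ _ _).mp
      (by rwa [BilinForm.toMatrix, Matrix.toLinearMap₂_toMatrix₂, Matrix.toLin_toMatrix])
  rw [LinearMap.BilinForm.toMatrix_ofIsCompl hpair halt hL hM hLM,
    LinearMap.toMatrix_ofIsCompl hLf hMf] at hadj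
  rw [LinearMap.toMatrix_ofIsCompl hLf hMf, Matrix.eq_transpose_of_isAdjointPair_fromBlocks hadj]

end DualBases

theorem exists_basis_toMatrix_eq_fromBlocks [FiniteDimensional K V] (h2 : (2 : K) ≠ 0)
    (halt : ω.IsAlt) (hω : ω.Nondegenerate) (hf : ω.IsSelfAdjoint f) {n : ℕ}
    (hn : finrank K V = n + n) :
    ∃ (b : Basis (Fin n ⊕ Fin n) K V) (B : Matrix (Fin n) (Fin n) K),
      BilinForm.toMatrix b ω = Matrix.fromBlocks 0 1 (-1) 0 ∧
        LinearMap.toMatrix b b f = Matrix.fromBlocks B 0 0 Bᵀ := by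
  obtain ⟨L, M, hLf, hMf, hL, hM, hLM⟩ :=
    exists_isCompl_isTotallyIsotropic_invtSubmodule h2 halt hω hf
  have hLn : finrank K L = n := by
    have := Submodule.finrank_add_eq_of_isCompl hLM
    rw [← hL.finrank_eq_of_isCompl hω hM hLM] at this
    omega
  obtain ⟨bM, hpair⟩ := exists_basis_apply_eq_ite hω hL hM hLM (finBasisOfFinrankEq K L hLn)
  exact ⟨_, _, toMatrix_ofIsCompl hpair halt hL hM hLM,
    hf.toMatrix_ofIsCompl hpair halt hL hM hLM hLf hMf⟩

end LinearMap.BilinForm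

open Matrix LinearMap.BilinForm in
theorem symplectic_spectral_matrix_perfect_general
    {K : Type*} [Field K] (hchar : (2 : K) ≠ 0) (n : ℕ)
    (A : Matrix (Fin n ⊕ Fin n) (Fin n ⊕ Fin n) K)
    (Ω : Matrix (Fin n ⊕ Fin n) (Fin n ⊕ Fin n) K)
    (hΩ : Ω = Matrix.fromBlocks 0 1 (-1) 0)
    (hA : A.transpose = Ω * A * Ω⁻¹) :
    ∃ C : Matrix (Fin n ⊕ Fin n) (Fin n ⊕ Fin n) K,
      C.transpose * Ω * C = Ω ∧
      ∃ B : Matrix (Fin n) (Fin n) K,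
        C⁻¹ * A * C = Matrix.fromBlocks B 0 0 B.transpose := by
  have hΩΩ : Ω * -Ω = 1 := hΩ ▸ fromBlocks_zero_one_neg_one_zero_mul_neg_self
  have halt : (toBilin' Ω).IsAlt := hΩ ▸ isAlt_toBilin'_fromBlocks_zero_one_neg_one_zero
  have hω : (toBilin' Ω).Nondegenerate :=
    nondegenerate_toBilin'_iff_det_ne_zero.mpr (isUnit_det_of_right_inverse hΩΩ).ne_zero
  have hf : (toBilin' Ω).IsSelfAdjoint (toLin' A) :=
    (isAdjointPair_toLinearMap₂' Ω Ω A A).mpr <| by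
      rw [IsAdjointPair, hA, inv_eq_right_inv hΩΩ, Matrix.mul_assoc, Matrix.neg_mul,
        ← Matrix.mul_neg, hΩΩ, Matrix.mul_one]
  obtain ⟨b, B, hbΩ, hbA⟩ :=
    exists_basis_toMatrix_eq_fromBlocks hchar halt hω hf (n := n) (by simp)
  refine ⟨(Pi.basisFun K _).toMatrix b, ?_, B, ?_⟩
  · rw [b.toMatrix_basisFun_transpose_mul_mul, hbΩ, hΩ]
  · rw [b.inv_toMatrix_basisFun_mul_mul, hbA]

theorem symplectic_spectral_matrix_perfect
    {K : Type*} [Field K] [PerfectField K] (hchar : (2 : K) ≠ 0) (n : ℕ) (hn : 0 < n)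
    (A : Matrix (Fin n ⊕ Fin n) (Fin n ⊕ Fin n) K)
    (Ω : Matrix (Fin n ⊕ Fin n) (Fin n ⊕ Fin n) K)
    (hΩ : Ω = Matrix.fromBlocks 0 1 (-1) 0)
    (hA : A.transpose = Ω * A * Ω⁻¹) :
    ∃ C : Matrix (Fin n ⊕ Fin n) (Fin n ⊕ Fin n) K,
      C.transpose * Ω * C = Ω ∧
      ∃ B : Matrix (Fin n) (Fin n) K,
        C⁻¹ * A * C = Matrix.fromBlocks B 0 0 B.transpose :=
  symplectic_spectral_matrix_perfect_general hchar n A Ω hΩ hA
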